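/- arXiv:0910.0408 — 2 statements merged into one kernel-verified Lean document; each statement's English description precedes it below -/
import Mathlib

section
/- For a holomorphic φ : H → H, if z ↦ 1/(z + conj(w)) is viewed as the Szegő kernel, then the kernel K¹(w,z) = ((φ(z) + conj(φ(w))) − λ⁻¹(z + conj(w)))/(z + conj(w)) is positive on H × H, where λ = sup_{z∈H} Re(z)/Re(φ(z)) is assumed finite and positive. -/
noncomputable section
open MeasureTheory Complex Set Filter Topology

/-- The right half-plane. -/
def Hs : Set ℂ := {z | 0 < z.re}

/-- A kernel `K` on `H × H` is positive if all finite quadratic forms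
`∑ cᵢ conj(cⱼ) K(xᵢ, xⱼ)` are nonnegative (real). -/
def PosKernel (K : ℂ → ℂ → ℂ) : Prop :=
  ∀ (n : ℕ) (c : Fin n → ℂ) (x : Fin n → ℂ), (∀ i, x i ∈ Hs) →
    0 ≤ (∑ i, ∑ j, c i * (starRingEnd ℂ) (c j) * K (x i) (x j)).re ∧
    (∑ i, ∑ j, c i * (starRingEnd ℂ) (c j) * K (x i) (x j)).im = 0

/-- The kernel `Kⁿ(w,z) = ((φ(z)+conj(φ(w)))ⁿ − λ⁻ⁿ(z+conj(w))ⁿ)/(z+conj(w))ⁿ`. -/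
def Kn (φ : ℂ → ℂ) (lam : ℝ) (m : ℕ) (w z : ℂ) : ℂ :=
  ((φ z + (starRingEnd ℂ) (φ w))^m - ((lam : ℂ)^m)⁻¹ * (z + (starRingEnd ℂ) w)^m)
    / (z + (starRingEnd ℂ) w)^m

/-!
Put `ψ = λ φ - id`; by the definition of `λ` it has nonnegative real part on `H`, and
`K¹(w, z) = λ⁻¹ (ψ z + conj (ψ w)) / (z + conj w)`. The Cayley transform `z ↦ (z - 1) / (z + 1)`
turns this kernel, up to a rank-one rescaling, into `(f z + conj (f w)) / (1 - z conj w)` for a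
holomorphic `f` with `Re f ≥ 0` on the unit disc. When `f` is holomorphic on the closed disc,
Cauchy's formula gives
`(f z + conj (f w)) / (1 - z conj w) = avg_{|ζ| = 1} 2 Re f(ζ) · ζ / (ζ - z) · conj (ζ / (ζ - w))`,
so every quadratic form of the kernel is the average of `2 Re f(ζ) |S(ζ)|² ≥ 0` for some `S`.
The general case follows by applying this to `f (r ·)` and letting `r → 1`.
-/

open Metric ComplexConjugate
open scoped ComplexOrder

def quadForm {n : ℕ} (K : ℂ → ℂ → ℂ) (c x : Fin n → ℂ) : ℂ :=
  ∑ i, ∑ j, c i * conj (c j) * K (x i) (x j)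

def discPickKernel (f : ℂ → ℂ) (w z : ℂ) : ℂ :=
  (f z + conj (f w)) / (1 - z * conj w)

def halfPlanePickKernel (ψ : ℂ → ℂ) (w z : ℂ) : ℂ :=
  (ψ z + conj (ψ w)) / (z + conj w)

lemma quadForm_const_mul {n : ℕ} (a : ℂ) (K : ℂ → ℂ → ℂ) (c x : Fin n → ℂ) :
    quadForm (fun w z ↦ a * K w z) c x = a * quadForm K c x := by
  simp only [quadForm, Finset.mul_sum]
  exact Finset.sum_congr rfl fun i _ => Finset.sum_congr rfl fun j _ => by ring

lemma posKernel_of_quadForm_nonneg {K : ℂ → ℂ → ℂ}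
    (hK : ∀ (n : ℕ) (c x : Fin n → ℂ), (∀ i, x i ∈ Hs) → 0 ≤ quadForm K c x) :
    PosKernel K := fun n c x hx =>
  have h := Complex.nonneg_iff.mp (hK n c x hx)
  ⟨h.1, h.2.symm⟩

section UnitCircle

lemma mul_conj_eq_one_of_norm_eq_one {ζ : ℂ} (hζ : ‖ζ‖ = 1) : ζ * conj ζ = 1 := by
  rw [Complex.mul_conj', hζ]
  norm_num

lemma ne_of_mem_sphere_of_mem_ball {ζ z : ℂ} (hζ : ζ ∈ sphere (0 : ℂ) |1|)
    (hz : z ∈ ball (0 : ℂ) 1) : ζ ≠ z := by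
  rintro rfl
  simp_all

lemma continuousOn_div_sub_sphere {z : ℂ} (hz : z ∈ ball (0 : ℂ) 1) :
    ContinuousOn (fun ζ ↦ ζ / (ζ - z)) (sphere 0 |1|) :=
  continuousOn_id.div (continuousOn_id.sub continuousOn_const) fun _ hζ =>
    sub_ne_zero.mpr (ne_of_mem_sphere_of_mem_ball hζ hz)

lemma one_sub_mul_ne_zero {z w : ℂ} (hz : ‖z‖ ≤ 1) (hw : ‖w‖ < 1) : 1 - w * z ≠ 0 := by
  intro h
  have : ‖w * z‖ < 1 := by
    rw [norm_mul]
    nlinarith [norm_nonneg w, norm_nonneg z]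
  rw [← sub_eq_zero.mp h] at this
  simp at this

lemma div_sub_mul_conj_div_sub {ζ z w : ℂ} (hζ : ‖ζ‖ = 1) (hz : ζ ≠ z) (hw : ζ ≠ w) :
    ζ / (ζ - z) * conj (ζ / (ζ - w)) * (1 - z * conj w)
      = ζ / (ζ - z) + conj (ζ / (ζ - w)) - 1 := by
  have hζζ := mul_conj_eq_one_of_norm_eq_one hζ
  have hw' : conj ζ - conj w ≠ 0 := by
    rw [← map_sub]
    exact (map_ne_zero _).mpr (sub_ne_zero.mpr hw)
  rw [map_div₀, map_sub]
  field_simp [sub_ne_zero.mpr hz, hw']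
  linear_combination (-z * conj w) * hζζ

lemma circleAverage_const_mul (a : ℂ) (g : ℂ → ℂ) (c : ℂ) (R : ℝ) :
    Real.circleAverage (fun ζ ↦ a * g ζ) c R = a * Real.circleAverage g c R :=
  Real.circleAverage_fun_smul (𝕜 := ℂ)

lemma circleAverage_conj {g : ℂ → ℂ} {c : ℂ} {R : ℝ} (hg : CircleIntegrable g c R) :
    Real.circleAverage (fun ζ ↦ conj (g ζ)) c R = conj (Real.circleAverage g c R) :=
  (conjCLE : ℂ →L[ℝ] ℂ).circleAverage_comp_comm hg

variable {f : ℂ → ℂ}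

lemma continuousOn_sphere_of_diffContOnCl (hf : DiffContOnCl ℂ f (ball 0 1)) :
    ContinuousOn f (sphere 0 |1|) :=
  hf.continuousOn.mono (by simpa [closure_ball] using sphere_subset_closedBall)

lemma circleAverage_div_sub_mul (hf : DiffContOnCl ℂ f (ball 0 1)) {w : ℂ}
    (hw : w ∈ ball (0 : ℂ) 1) : Real.circleAverage (fun ζ ↦ ζ / (ζ - w) * f ζ) 0 1 = f w := by
  have := DiffContOnCl.circleAverage_smul_div (c := 0) (R := 1) (by rwa [abs_one])
    (by rwa [abs_one])
  simp only [sub_zero] at this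
  exact this

lemma circleAverage_conj_div_sub_sub_one_mul (hf : DiffContOnCl ℂ f (ball 0 1)) {w : ℂ}
    (hw : w ∈ ball (0 : ℂ) 1) :
    Real.circleAverage (fun ζ ↦ conj (ζ / (ζ - w) - 1) * f ζ) 0 1 = 0 := by
  have hden : ∀ ζ ∈ closedBall (0 : ℂ) 1, 1 - conj w * ζ ≠ 0 := fun ζ hζ =>
    one_sub_mul_ne_zero (mem_closedBall_zero_iff.mp hζ) (by simpa using hw)
  have hh : DiffContOnCl ℂ (fun ζ ↦ conj w * ζ / (1 - conj w * ζ) * f ζ) (ball 0 |1|) := by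
    rw [abs_one]
    refine DiffContOnCl.smul (𝕜' := ℂ) (DifferentiableOn.diffContOnCl ?_) hf
    rw [closure_ball _ one_ne_zero]
    fun_prop (disch := exact hden)
  calc _ = Real.circleAverage (fun ζ ↦ conj w * ζ / (1 - conj w * ζ) * f ζ) 0 1 := by
        refine Real.circleAverage_congr_sphere fun ζ hζ => ?_
        have hζζ := mul_conj_eq_one_of_norm_eq_one (by simpa using hζ)
        have h1 : ζ - w ≠ 0 := sub_ne_zero.mpr (ne_of_mem_sphere_of_mem_ball hζ hw)
        have h2 : conj ζ - conj w ≠ 0 := by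
          rw [← map_sub]
          exact (map_ne_zero _).mpr h1
        have h3 := hden ζ (sphere_subset_closedBall (by simpa using hζ))
        simp only [map_sub, map_div₀, map_one]
        field_simp
        linear_combination (-(conj w * f ζ)) * hζζ
    _ = 0 := by
        rw [hh.circleAverage]
        simp

theorem circleAverage_add_conj_mul_div_sub_mul_conj (hf : DiffContOnCl ℂ f (ball 0 1))
    {z w : ℂ} (hz : z ∈ ball (0 : ℂ) 1) (hw : w ∈ ball (0 : ℂ) 1) :
    Real.circleAverage (fun ζ ↦ (f ζ + conj (f ζ)) * (ζ / (ζ - z) * conj (ζ / (ζ - w)))) 0 1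
      = discPickKernel f w z := by
  have hf' := continuousOn_sphere_of_diffContOnCl hf
  have hconj {g : ℂ → ℂ} (hg : ContinuousOn g (sphere 0 |1|)) :
      ContinuousOn (fun ζ ↦ conj (g ζ)) (sphere 0 |1|) :=
    Complex.continuous_conj.comp_continuousOn hg
  have hQ : ∀ x ∈ ball (0 : ℂ) 1, ContinuousOn (fun ζ ↦ ζ / (ζ - x) * f ζ) (sphere 0 |1|) :=
    fun x hx => (continuousOn_div_sub_sphere hx).mul hf'
  have hR : ∀ x ∈ ball (0 : ℂ) 1,
      ContinuousOn (fun ζ ↦ conj (ζ / (ζ - x) - 1) * f ζ) (sphere 0 |1|) := fun x hx =>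
    (hconj ((continuousOn_div_sub_sphere hx).sub continuousOn_const)).mul hf'
  have hzw : 1 - z * conj w ≠ 0 := by
    rw [mul_comm]
    exact one_sub_mul_ne_zero (mem_ball_zero_iff.mp hz).le (by simpa using hw)
  -- On the circle `(1 - z conj w) a_z conj a_w = a_z + conj a_w - 1` for `a_x ζ = ζ / (ζ - x)`;
  -- this splits the average into two Cauchy integrals and two conjugated mean-zero terms.
  calc _ = Real.circleAverage (fun ζ ↦ (1 - z * conj w)⁻¹ *
          (ζ / (ζ - z) * f ζ + conj (ζ / (ζ - w) * f ζ)
            + (conj (ζ / (ζ - w) - 1) * f ζ + conj (conj (ζ / (ζ - z) - 1) * f ζ)))) 0 1 := by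
        refine Real.circleAverage_congr_sphere fun ζ hζ => ?_
        have hζ' := div_sub_mul_conj_div_sub (by simpa using hζ)
          (ne_of_mem_sphere_of_mem_ball hζ hz) (ne_of_mem_sphere_of_mem_ball hζ hw)
        rw [eq_inv_mul_iff_mul_eq₀ hzw]
        simp only [map_mul, map_sub, map_one, Complex.conj_conj] at hζ' ⊢
        linear_combination (f ζ + conj (f ζ)) * hζ'
    _ = discPickKernel f w z := by
        rw [circleAverage_const_mul, Real.circleAverage_fun_add
          ((hQ z hz).fun_add (hconj (hQ w hw))).circleIntegrable'
          ((hR w hw).fun_add (hconj (hR z hz))).circleIntegrable',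
          Real.circleAverage_fun_add (hQ z hz).circleIntegrable'
            (hconj (hQ w hw)).circleIntegrable',
          Real.circleAverage_fun_add (hR w hw).circleIntegrable'
            (hconj (hR z hz)).circleIntegrable',
          circleAverage_conj (hQ w hw).circleIntegrable',
          circleAverage_conj (hR z hz).circleIntegrable',
          circleAverage_conj_div_sub_sub_one_mul hf hw,
          circleAverage_conj_div_sub_sub_one_mul hf hz,
          circleAverage_div_sub_mul hf hz, circleAverage_div_sub_mul hf hw, map_zero, add_zero,
          add_zero, inv_mul_eq_div, discPickKernel]

theorem quadForm_discPickKernel_nonneg_of_diffContOnCl {n : ℕ} (hf : DiffContOnCl ℂ f (ball 0 1))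
    (hre : ∀ ζ ∈ sphere (0 : ℂ) 1, 0 ≤ (f ζ).re) (c u : Fin n → ℂ)
    (hu : ∀ i, u i ∈ ball (0 : ℂ) 1) : 0 ≤ quadForm (discPickKernel f) c u := by
  have hf' := continuousOn_sphere_of_diffContOnCl hf
  have ha : ∀ i, ContinuousOn (fun ζ ↦ ζ / (ζ - u i)) (sphere 0 |1|) := fun i =>
    continuousOn_div_sub_sphere (hu i)
  set S : ℂ → ℂ := fun ζ ↦ ∑ j, conj (c j) * (ζ / (ζ - u j))
  set F : Fin n → Fin n → ℂ → ℂ := fun i j ζ ↦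
    c i * conj (c j) * ((f ζ + conj (f ζ)) * (ζ / (ζ - u j) * conj (ζ / (ζ - u i))))
  have hF : ∀ i j, ContinuousOn (F i j) (sphere 0 |1|) := fun i j =>
    continuousOn_const.mul ((hf'.add (Complex.continuous_conj.comp_continuousOn hf')).mul
      ((ha j).mul (Complex.continuous_conj.comp_continuousOn (ha i))))
  have hS : ContinuousOn S (sphere 0 |1|) :=
    continuousOn_finsetSum _ fun j _ => continuousOn_const.mul (ha j)
  calc (0 : ℂ)
      ≤ ((Real.circleAverage (fun ζ ↦ 2 * (f ζ).re * Complex.normSq (S ζ)) 0 1 : ℝ) : ℂ) := by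
        refine Complex.zero_le_real.mpr (Real.circleAverage_nonneg_of_nonneg fun ζ hζ => ?_)
        exact mul_nonneg (by linarith [hre ζ (by simpa using hζ)]) (Complex.normSq_nonneg _)
    _ = Real.circleAverage (fun ζ ↦ ∑ i, ∑ j, F i j ζ) 0 1 := by
        rw [← Complex.ofRealCLM_apply, ← ContinuousLinearMap.circleAverage_comp_comm]
        · congr 1
          funext ζ
          simp only [Function.comp_apply, Complex.ofRealCLM_apply, F]
          rw [Complex.ofReal_mul, Complex.normSq_eq_conj_mul_self, ← Complex.add_conj, map_sum,
            Finset.sum_mul_sum, Finset.mul_sum]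
          refine Finset.sum_congr rfl fun i _ => ?_
          rw [Finset.mul_sum]
          refine Finset.sum_congr rfl fun j _ => ?_
          simp only [map_mul, Complex.conj_conj]
          ring
        · exact ContinuousOn.circleIntegrable' <| by fun_prop
    _ = quadForm (discPickKernel f) c u := by
        rw [Real.circleAverage_fun_sum fun i _ =>
          (continuousOn_finsetSum _ fun j _ => hF i j).circleIntegrable']
        refine Finset.sum_congr rfl fun i _ => ?_
        rw [Real.circleAverage_fun_sum fun j _ => (hF i j).circleIntegrable']
        refine Finset.sum_congr rfl fun j _ => ?_
        rw [circleAverage_const_mul, circleAverage_add_conj_mul_div_sub_mul_conj hf (hu j) (hu i)]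

theorem quadForm_discPickKernel_nonneg {n : ℕ} (hf : DifferentiableOn ℂ f (ball 0 1))
    (hre : ∀ ζ ∈ ball (0 : ℂ) 1, 0 ≤ (f ζ).re) (c u : Fin n → ℂ)
    (hu : ∀ i, u i ∈ ball (0 : ℂ) 1) : 0 ≤ quadForm (discPickKernel f) c u := by
  set Q : ℝ → ℂ := fun r ↦ quadForm (discPickKernel fun ζ ↦ f (r * ζ)) c u
  have hmaps {r : ℝ} (hr : r ∈ Ioo 0 1) {ζ : ℂ} (hζ : ζ ∈ closedBall (0 : ℂ) 1) :
      (r : ℂ) * ζ ∈ ball (0 : ℂ) 1 := by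
    rw [mem_ball_zero_iff, norm_mul, Complex.norm_real, Real.norm_of_nonneg hr.1.le]
    nlinarith [mem_closedBall_zero_iff.mp hζ, hr.1, hr.2, norm_nonneg ζ]
  have hQ : ∀ r ∈ Ioo (0 : ℝ) 1, 0 ≤ Q r := fun r hr =>
    quadForm_discPickKernel_nonneg_of_diffContOnCl
      (DifferentiableOn.diffContOnCl <| by
        rw [closure_ball _ one_ne_zero]
        exact hf.comp (by fun_prop) fun ζ hζ => hmaps hr hζ)
      (fun ζ hζ => hre _ (hmaps hr (sphere_subset_closedBall hζ))) c u hu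
  have hf_cont : ∀ i, ContinuousAt (fun r : ℝ ↦ f (r * u i)) 1 := fun i =>
    ContinuousAt.comp (g := f)
      (by simpa using (hf.differentiableAt (isOpen_ball.mem_nhds (hu i))).continuousAt)
      (by fun_prop)
  have hQ_cont : ContinuousAt Q 1 :=
    tendsto_finsetSum _ fun i _ => tendsto_finsetSum _ fun j _ =>
      continuousAt_const.mul (((hf_cont j).add
        (Complex.continuous_conj.continuousAt.comp (hf_cont i))).div_const _)
  simpa [Q] using ge_of_tendsto (hQ_cont.tendsto.mono_left nhdsWithin_le_nhds)
    (eventually_mem_set.mpr (Ioo_mem_nhdsLT zero_lt_one) |>.mono hQ)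

end UnitCircle

section HalfPlane

def cayley (z : ℂ) : ℂ := (z - 1) / (z + 1)

def cayleyInv (u : ℂ) : ℂ := (1 + u) / (1 - u)

lemma add_conj_ne_zero_of_mem_Hs {z w : ℂ} (hz : z ∈ Hs) (hw : 0 ≤ w.re) : z + conj w ≠ 0 := by
  intro h
  have := congrArg Complex.re h
  simp only [Complex.add_re, Complex.conj_re, Complex.zero_re] at this
  exact absurd this (ne_of_gt (add_pos_of_pos_of_nonneg hz hw))

lemma add_one_ne_zero_of_mem_Hs {z : ℂ} (hz : z ∈ Hs) : z + 1 ≠ 0 := by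
  simpa using add_conj_ne_zero_of_mem_Hs hz (w := 1) zero_le_one

lemma cayley_mem_ball {z : ℂ} (hz : z ∈ Hs) : cayley z ∈ ball (0 : ℂ) 1 := by
  have hz' : 0 < z.re := hz
  rw [mem_ball_zero_iff, cayley, norm_div,
    div_lt_one (norm_pos_iff.mpr (add_one_ne_zero_of_mem_Hs hz)),
    ← sq_lt_sq₀ (norm_nonneg _) (norm_nonneg _), ← Complex.normSq_eq_norm_sq,
    ← Complex.normSq_eq_norm_sq]
  simp only [Complex.normSq_apply, Complex.sub_re, Complex.sub_im, Complex.add_re, Complex.add_im,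
    Complex.one_re, Complex.one_im]
  nlinarith

lemma one_sub_ne_zero_of_mem_ball {u : ℂ} (hu : u ∈ ball (0 : ℂ) 1) : 1 - u ≠ 0 := by
  simpa using one_sub_mul_ne_zero (z := 1) (by simp) (mem_ball_zero_iff.mp hu)

lemma differentiableOn_cayleyInv : DifferentiableOn ℂ cayleyInv (ball 0 1) :=
  (differentiableOn_const 1).add differentiableOn_id |>.div
    ((differentiableOn_const 1).sub differentiableOn_id) fun _ hu => one_sub_ne_zero_of_mem_ball hu

lemma mapsTo_cayleyInv : MapsTo cayleyInv (ball 0 1) Hs := by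
  intro u hu
  have h2 : Complex.normSq u < 1 := by
    rw [Complex.normSq_eq_norm_sq]
    nlinarith [norm_nonneg u, mem_ball_zero_iff.mp hu]
  show 0 < (cayleyInv u).re
  rw [cayleyInv, Complex.div_re, ← add_div]
  refine div_pos ?_ (Complex.normSq_pos.mpr (one_sub_ne_zero_of_mem_ball hu))
  simp only [Complex.normSq_apply, Complex.add_re, Complex.add_im, Complex.sub_re,
    Complex.sub_im, Complex.one_re, Complex.one_im] at h2 ⊢
  nlinarith

lemma cayleyInv_cayley {z : ℂ} (hz : z + 1 ≠ 0) : cayleyInv (cayley z) = z := by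
  have h : (1 : ℂ) - (z - 1) / (z + 1) = 2 / (z + 1) := by
    field_simp
    ring
  rw [cayleyInv, cayley, h]
  field_simp
  ring

lemma one_sub_cayley_mul_conj_cayley (z w : ℂ) (hz : z + 1 ≠ 0) (hw : w + 1 ≠ 0) :
    1 - cayley z * conj (cayley w) = 2 * (z + conj w) / ((z + 1) * conj (w + 1)) := by
  have hw' : conj w + 1 ≠ 0 := by simpa using (map_ne_zero conj).mpr hw
  simp only [cayley, map_div₀, map_sub, map_add, map_one]
  field_simp
  ring

theorem quadForm_halfPlanePickKernel_nonneg {n : ℕ} {ψ : ℂ → ℂ} (hψ : DifferentiableOn ℂ ψ Hs)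
    (hre : ∀ z ∈ Hs, 0 ≤ (ψ z).re) (c x : Fin n → ℂ) (hx : ∀ i, x i ∈ Hs) :
    0 ≤ quadForm (halfPlanePickKernel ψ) c x := by
  have h := quadForm_discPickKernel_nonneg (hψ.comp differentiableOn_cayleyInv mapsTo_cayleyInv)
    (fun u hu => hre _ (mapsTo_cayleyInv hu))
    (fun i ↦ c i / conj (x i + 1)) (fun i ↦ cayley (x i)) fun i ↦ cayley_mem_ball (hx i)
  calc (0 : ℂ) ≤ 2 * quadForm (discPickKernel (ψ ∘ cayleyInv))
        (fun i ↦ c i / conj (x i + 1)) (fun i ↦ cayley (x i)) := mul_nonneg (by norm_num) h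
    _ = quadForm (halfPlanePickKernel ψ) c x := by
      simp only [quadForm, Finset.mul_sum]
      refine Finset.sum_congr rfl fun i _ => Finset.sum_congr rfl fun j _ => ?_
      have hi := add_one_ne_zero_of_mem_Hs (hx i)
      have hj := add_one_ne_zero_of_mem_Hs (hx j)
      have hi' : conj (x i + 1) ≠ 0 := (map_ne_zero conj).mpr hi
      have hij := add_conj_ne_zero_of_mem_Hs (hx j) (hx i).le
      simp only [discPickKernel, halfPlanePickKernel, Function.comp_apply, cayleyInv_cayley hi,
        cayleyInv_cayley hj, one_sub_cayley_mul_conj_cayley _ _ hj hi, map_div₀, Complex.conj_conj]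
      field_simp

end HalfPlane

lemma Kn_one_eq_inv_mul_halfPlanePickKernel {φ : ℂ → ℂ} {lam : ℝ} (hlam : lam ≠ 0) (w z : ℂ) :
    Kn φ lam 1 w z = (lam : ℂ)⁻¹ * halfPlanePickKernel (fun z ↦ lam * φ z - z) w z := by
  have : (lam : ℂ) ≠ 0 := Complex.ofReal_ne_zero.mpr hlam
  simp only [Kn, halfPlanePickKernel, pow_one, map_sub, map_mul, Complex.conj_ofReal]
  field_simp
  ring

/-- If `φ : H → H` is holomorphic and `λ = sup Re z / Re φ(z)` is finite and
positive, then the kernel `K¹` is positive on `H × H`. -/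
theorem K_one_pos (φ : ℂ → ℂ) (hφd : DifferentiableOn ℂ φ Hs) (hφm : MapsTo φ Hs Hs)
    (lam : ℝ) (hlam : 0 < lam)
    (hsup : IsLUB {r | ∃ z ∈ Hs, r = z.re / (φ z).re} lam) :
    PosKernel (Kn φ lam 1) := by
  have hψ_re : ∀ z ∈ Hs, 0 ≤ ((lam : ℂ) * φ z - z).re := fun z hz => by
    have hφz : 0 < (φ z).re := hφm hz
    have hle : z.re / (φ z).re ≤ lam := hsup.1 ⟨z, hz, rfl⟩
    rw [div_le_iff₀ hφz] at hle
    simpa [Complex.mul_re] using hle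
  refine posKernel_of_quadForm_nonneg fun n c x hx => ?_
  have h := quadForm_halfPlanePickKernel_nonneg
    (((differentiableOn_const _).mul hφd).sub differentiableOn_id) hψ_re c x hx
  rw [funext₂ (Kn_one_eq_inv_mul_halfPlanePickKernel hlam.ne'), quadForm_const_mul]
  exact mul_nonneg (by exact_mod_cast (inv_pos.mpr hlam).le) h
end
end

section
/- (Half-plane Julia–Carathéodory, partial) For a holomorphic φ : H → H, if sup_{z∈H} Re(z)/Re(φ(z)) = λ < ∞, then for every sequence zₙ = xₙ + i yₙ with xₙ → ∞ and |yₙ|/xₙ bounded, φ(zₙ) → ∞, i.e., φ fixes infinity non-tangentially. -/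
noncomputable section
open MeasureTheory Complex Set Filter Topology

/-! The bound `Re z / Re φ(z) ≤ λ` says `Re φ(z) ≥ Re z / λ`, so `Re φ(zₙ)`, and with it
`|φ(zₙ)|`, tends to infinity as soon as `Re zₙ` does, whatever the direction of approach. -/

section RePositive

variable {φ : ℂ → ℂ} {lam : ℝ}

lemma re_le_mul_re_of_forall_re_div_re_le (hφm : MapsTo φ Hs Hs)
    (hub : ∀ w ∈ Hs, w.re / (φ w).re ≤ lam) {w : ℂ} (hw : w ∈ Hs) :
    w.re ≤ lam * (φ w).re :=
  (div_le_iff₀ (hφm hw)).1 (hub w hw)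

lemma pos_of_forall_re_div_re_le (hφm : MapsTo φ Hs Hs)
    (hub : ∀ w ∈ Hs, w.re / (φ w).re ≤ lam) : 0 < lam := by
  have h1 : (1 : ℂ) ∈ Hs := by simp [Hs]
  have hle := re_le_mul_re_of_forall_re_div_re_le hφm hub h1
  rw [one_re] at hle
  exact pos_of_mul_pos_left (one_pos.trans_le hle) (hφm h1).le

end RePositive

lemma tendsto_norm_atTop_of_le_mul_re {α : Type*} {l : Filter α} {f : α → ℂ} {x : α → ℝ}
    {c : ℝ} (hc : 0 < c) (hle : ∀ a, x a ≤ c * (f a).re) (hx : Tendsto x l atTop) :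
    Tendsto (fun a => ‖f a‖) l atTop := by
  refine tendsto_atTop_mono (fun a => ?_) (hx.atTop_div_const hc)
  calc x a / c ≤ (f a).re := (div_le_iff₀' hc).2 (hle a)
    _ ≤ ‖f a‖ := re_le_norm _

theorem fixes_infinity_nontangentially_general (φ : ℂ → ℂ)
    (hφm : MapsTo φ Hs Hs)
    (lam : ℝ) (hsup : IsLUB {r | ∃ z ∈ Hs, r = z.re / (φ z).re} lam)
    (z : ℕ → ℂ) (hzH : ∀ n, z n ∈ Hs)
    (hx : Tendsto (fun n => (z n).re) atTop atTop) :
    Tendsto (fun n => ‖φ (z n)‖) atTop atTop := by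
  have hub : ∀ w ∈ Hs, w.re / (φ w).re ≤ lam := fun w hw => hsup.1 ⟨w, hw, rfl⟩
  exact tendsto_norm_atTop_of_le_mul_re (pos_of_forall_re_div_re_le hφm hub)
    (fun n => re_le_mul_re_of_forall_re_div_re_le hφm hub (hzH n)) hx

/-- If `sup Re z / Re φ(z) = λ < ∞` then `φ` fixes `∞` non-tangentially: for any
sequence `zₙ ∈ H` with `Re zₙ → ∞` and `|Im zₙ|/Re zₙ` bounded, `|φ(zₙ)| → ∞`. -/
theorem fixes_infinity_nontangentially (φ : ℂ → ℂ)
    (hφd : DifferentiableOn ℂ φ Hs) (hφm : MapsTo φ Hs Hs)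
    (lam : ℝ) (hsup : IsLUB {r | ∃ z ∈ Hs, r = z.re / (φ z).re} lam)
    (z : ℕ → ℂ) (hzH : ∀ n, z n ∈ Hs)
    (hx : Tendsto (fun n => (z n).re) atTop atTop)
    (hy : ∃ C : ℝ, ∀ n, |(z n).im| / (z n).re ≤ C) :
    Tendsto (fun n => ‖φ (z n)‖) atTop atTop :=
  fixes_infinity_nontangentially_general φ hφm lam hsup z hzH hx
end
end
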